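/- Let (g₈, J) have (1,0)-basis satisfying dω¹ = −(A−i)ω¹∧ω³ − (A+i)ω¹∧ω̄³ + B ω³∧ω̄³, dω² = (A−i)ω²∧ω³ + (A+i)ω²∧ω̄³ + C ω³∧ω̄³, dω³ = 0, with Im A ≠ 0, and let F be a generic Hermitian form 2F = i(r²ω¹∧ω̄¹ + s²ω²∧ω̄² + t²ω³∧ω̄³) + u ω¹∧ω̄² − ū ω²∧ω̄¹ + v ω²∧ω̄³ − v̄ ω³∧ω̄² + z ω¹∧ω̄³ − z̄ ω³∧ω̄¹. Then ∂∂̄F ∧ F = 2( r²s²(1 + (Re A)²) + |u|²(Im A)² ) ω¹²³∧ω̄¹²³. In particular ∂∂̄F ∧ F never vanishes (since r²s² > |u|²), so g₈ carries no SKT metric. -/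

import Mathlib

noncomputable section

/-- The space of invariant complex forms: the exterior algebra over the span of
`ω¹, ω², ω³, ω̄¹, ω̄², ω̄³` (indexed `0,…,5`). -/
abbrev Lambda : Type := ExteriorAlgebra ℂ (Fin 6 → ℂ)

/-- The generators `ω¹, ω², ω³, ω̄¹, ω̄², ω̄³` as degree-one elements. -/
def w (i : Fin 6) : Lambda := ExteriorAlgebra.ι ℂ (Pi.single i 1)

/-- Antiderivation property (Leibniz rule against `1`-forms): the defining extension
property of (the bigraded pieces of) the Chevalley–Eilenberg differential. -/
def IsAntideriv (D : Lambda →ₗ[ℂ] Lambda) : Prop :=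
  D 1 = 0 ∧ ∀ (v : Fin 6 → ℂ) (x : Lambda),
    D (ExteriorAlgebra.ι ℂ v * x) =
      D (ExteriorAlgebra.ι ℂ v) * x - ExteriorAlgebra.ι ℂ v * D x

/-- The generic Hermitian form
`2F = i(r²ω¹∧ω̄¹ + s²ω²∧ω̄² + t²ω³∧ω̄³) + uω¹∧ω̄² − ūω²∧ω̄¹ + vω²∧ω̄³ − v̄ω³∧ω̄²
  + zω¹∧ω̄³ − z̄ω³∧ω̄¹`. -/
def Fherm (r s t : ℝ) (u v z : ℂ) : Lambda :=
  (1 / 2 : ℂ) •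
    (Complex.I • ((r : ℂ) ^ 2 • (w 0 * w 3) + (s : ℂ) ^ 2 • (w 1 * w 4) +
        (t : ℂ) ^ 2 • (w 2 * w 5)) +
      u • (w 0 * w 4) - (starRingEnd ℂ) u • (w 1 * w 3) +
      v • (w 1 * w 5) - (starRingEnd ℂ) v • (w 2 * w 4) +
      z • (w 0 * w 5) - (starRingEnd ℂ) z • (w 2 * w 3))

/-- Positivity constraints making `Fherm r s t u v z` a Hermitian metric. -/
def HermPos (r s t : ℝ) (u v z : ℂ) : Prop :=
  r ≠ 0 ∧ s ≠ 0 ∧ t ≠ 0 ∧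
  r ^ 2 * s ^ 2 > Complex.normSq u ∧ s ^ 2 * t ^ 2 > Complex.normSq v ∧
  r ^ 2 * t ^ 2 > Complex.normSq z ∧
  r ^ 2 * s ^ 2 * t ^ 2 +
      2 * (Complex.I * (starRingEnd ℂ) u * (starRingEnd ℂ) v * z).re >
    t ^ 2 * Complex.normSq u + r ^ 2 * Complex.normSq v + s ^ 2 * Complex.normSq z

/-! The Leibniz rule reduces `∂∂̄F` to the values of `∂` and `∂̄` on the generators. Every `∂ωⁱ`
and `∂ω̄ⁱ` is a multiple of `ω³`, so the part of `∂̄F` divisible by `ω³`, which carries all the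
dependence on `B`, `C`, `t`, `v`, `z`, is `∂`-closed, and
`∂∂̄F = -2i(1 + (Re A)²)(r² ω¹³∧ω̄¹³ + s² ω²³∧ω̄²³) + 2(Im A)²(u ω¹³∧ω̄²³ - ū ω²³∧ω̄¹³)`.
Since every term contains `ω³ ∧ ω̄³`, wedging with `F` only sees the `ω¹ ∧ ω̄¹`, `ω² ∧ ω̄²`,
`ω¹ ∧ ω̄²`, `ω² ∧ ω̄¹` components of `F`, and the resulting multiple of the volume form is positive
as soon as `r, s ≠ 0`. -/

open Complex ComplexConjugate

open ExteriorAlgebra in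
theorem ιMulti_basisFun_ne_zero {R : Type*} [CommRing R] [Nontrivial R] (n : ℕ) :
    ιMulti R n (fun i => Pi.single i 1 : Fin n → Fin n → R) ≠ 0 := by
  have h := (Pi.basisFun R (Fin n)).ExteriorAlgebra.ne_zero Finset.univ
  rw [ExteriorAlgebra.basis_apply_ofCard _ (Finset.card_fin n)] at h
  convert h using 3 with i
  rw [Function.comp_apply, Pi.basisFun_apply]
  congr
  exact congrFun (Finset.orderEmbOfFin_unique _ (fun _ => Finset.mem_univ _) strictMono_id) _

theorem w_top_ne_zero : (w 0 * w 1 * w 2 * w 3 * w 4 * w 5 : Lambda) ≠ 0 := by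
  have h : w 0 * w 1 * w 2 * w 3 * w 4 * w 5 = ExteriorAlgebra.ιMulti ℂ 6 (Pi.single · 1) := by
    simp only [ExteriorAlgebra.ιMulti_apply, List.ofFn_succ, List.ofFn_zero, List.prod_cons,
      List.prod_nil, mul_one, mul_assoc, w]
    rfl
  exact h ▸ ιMulti_basisFun_ne_zero 6

theorem w_mul_w_comm (i j : Fin 6) : w j * w i = -(w i * w j) := by
  have := ExteriorAlgebra.ι_add_mul_swap (R := ℂ) (M := Fin 6 → ℂ) (Pi.single i 1) (Pi.single j 1)
  unfold w
  linear_combination (norm := module) this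

theorem w_mul_self (i : Fin 6) : w i * w i = 0 := ExteriorAlgebra.ι_sq_zero _

theorem w_mul_w_self_mul (i : Fin 6) (x : Lambda) : w i * (w i * x) = 0 := by
  rw [← mul_assoc, w_mul_self, zero_mul]

theorem w_mul_w_of_lt {i j : Fin 6} (_ : i < j) : w j * w i = -(w i * w j) := w_mul_w_comm i j

theorem w_mul_w_mul_of_lt {i j : Fin 6} (_ : i < j) (x : Lambda) :
    w j * (w i * x) = -(w i * (w j * x)) := by
  rw [← mul_assoc, w_mul_w_comm i j, neg_mul, mul_assoc]

theorem IsAntideriv.map_w_mul {D : Lambda →ₗ[ℂ] Lambda} (hD : IsAntideriv D) (i : Fin 6)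
    (x : Lambda) : D (w i * x) = D (w i) * x - w i * D x :=
  hD.2 _ _

theorem Db_Fherm (A B C : ℂ) (Db : Lambda →ₗ[ℂ] Lambda) (hDb : IsAntideriv Db)
    (hb0 : Db (w 0) = (-(A + I)) • (w 0 * w 5) + B • (w 2 * w 5))
    (hb1 : Db (w 1) = (A + I) • (w 1 * w 5) + C • (w 2 * w 5))
    (hb2 : Db (w 2) = 0)
    (hb3 : Db (w 3) = (-(conj A + I)) • (w 3 * w 5))
    (hb4 : Db (w 4) = (conj A + I) • (w 4 * w 5))
    (hb5 : Db (w 5) = 0)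
    (r s t : ℝ) (u v z : ℂ) :
    Db (Fherm r s t u v z) =
      ((r : ℂ) ^ 2 * (I * A.re - 1)) • (w 0 * w 3 * w 5) + (I * A.im * u) • (w 0 * w 4 * w 5) +
        (I * A.im * conj u) • (w 1 * w 3 * w 5) +
        ((s : ℂ) ^ 2 * (1 - I * A.re)) • (w 1 * w 4 * w 5) +
        w 2 * (((C * conj u - I * B * (r : ℂ) ^ 2 - (conj A + I) * conj z) / 2) • (w 3 * w 5) +
          (((conj A + I) * conj v - B * u - I * C * (s : ℂ) ^ 2) / 2) • (w 4 * w 5)) := by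
  rw [re_eq_add_conj, im_eq_sub_conj, div_mul_eq_div_div, div_I]
  simp (disch := decide) only [Fherm, smul_add, smul_sub, smul_smul, map_add, map_sub, map_smul,
    hDb.map_w_mul, hb0, hb1, hb2, hb3, hb4, hb5, mul_assoc, smul_mul_assoc, mul_smul_comm,
    add_mul, mul_add, mul_sub, mul_neg, smul_neg, mul_zero, zero_mul, smul_zero, add_zero,
    sub_zero, zero_sub, w_mul_w_of_lt, w_mul_self]
  match_scalars <;> grind [I_sq]

theorem Dp_Db_Fherm (A B C : ℂ) (Dp Db : Lambda →ₗ[ℂ] Lambda) (hDp : IsAntideriv Dp)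
    (hDb : IsAntideriv Db)
    (hp0 : Dp (w 0) = (-(A - I)) • (w 0 * w 2))
    (hp1 : Dp (w 1) = (A - I) • (w 1 * w 2))
    (hp2 : Dp (w 2) = 0)
    (hp3 : Dp (w 3) = (-(conj A - I)) • (w 3 * w 2) + conj B • (w 5 * w 2))
    (hp4 : Dp (w 4) = (conj A - I) • (w 4 * w 2) + conj C • (w 5 * w 2))
    (hp5 : Dp (w 5) = 0)
    (hb0 : Db (w 0) = (-(A + I)) • (w 0 * w 5) + B • (w 2 * w 5))
    (hb1 : Db (w 1) = (A + I) • (w 1 * w 5) + C • (w 2 * w 5))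
    (hb2 : Db (w 2) = 0)
    (hb3 : Db (w 3) = (-(conj A + I)) • (w 3 * w 5))
    (hb4 : Db (w 4) = (conj A + I) • (w 4 * w 5))
    (hb5 : Db (w 5) = 0)
    (r s t : ℝ) (u v z : ℂ) :
    Dp (Db (Fherm r s t u v z)) =
      (-2 * I * (1 + (A.re : ℂ) ^ 2)) •
          ((r : ℂ) ^ 2 • (w 0 * w 2 * w 3 * w 5) + (s : ℂ) ^ 2 • (w 1 * w 2 * w 4 * w 5)) +
        (2 * (A.im : ℂ) ^ 2) • (u • (w 0 * w 2 * w 4 * w 5) - conj u • (w 1 * w 2 * w 3 * w 5)) := by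
  rw [Db_Fherm A B C Db hDb hb0 hb1 hb2 hb3 hb4 hb5, re_eq_add_conj, im_eq_sub_conj, div_mul_eq_div_div, div_I]
  simp (disch := decide) only [smul_add, smul_sub, smul_smul, map_add, map_smul,
    hDp.map_w_mul, hp0, hp1, hp2, hp3, hp4, hp5, mul_assoc, smul_mul_assoc, mul_smul_comm,
    add_mul, mul_add, sub_mul, mul_sub, neg_mul, mul_neg, smul_neg, mul_zero, zero_mul,
    smul_zero, add_zero, sub_zero, neg_zero, w_mul_w_of_lt, w_mul_self, w_mul_w_self_mul]
  match_scalars <;> grind [I_sq]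

theorem mul_Fherm (α β : ℂ) (r s t : ℝ) (u v z : ℂ) :
    (α • ((r : ℂ) ^ 2 • (w 0 * w 2 * w 3 * w 5) + (s : ℂ) ^ 2 • (w 1 * w 2 * w 4 * w 5)) +
        β • (u • (w 0 * w 2 * w 4 * w 5) - conj u • (w 1 * w 2 * w 3 * w 5))) *
        Fherm r s t u v z =
      (I * α * (r : ℂ) ^ 2 * (s : ℂ) ^ 2 + β * u * conj u) •
        (w 0 * w 1 * w 2 * w 3 * w 4 * w 5) := by
  simp (disch := decide) only [Fherm, smul_add, smul_sub, smul_smul, mul_assoc, smul_mul_assoc,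
    mul_smul_comm, add_mul, mul_add, sub_mul, mul_sub, mul_neg, smul_neg, neg_neg, mul_zero,
    smul_zero, add_zero, zero_add, sub_zero, zero_sub, neg_zero, w_mul_w_of_lt,
    w_mul_w_mul_of_lt, w_mul_self, w_mul_w_self_mul]
  match_scalars
  ring

theorem stmt12_general (A B C : ℂ)
    (Dp Db : Lambda →ₗ[ℂ] Lambda) (hDp : IsAntideriv Dp) (hDb : IsAntideriv Db)
    (hp0 : Dp (w 0) = (-(A - Complex.I)) • (w 0 * w 2))
    (hp1 : Dp (w 1) = (A - Complex.I) • (w 1 * w 2))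
    (hp2 : Dp (w 2) = 0)
    (hp3 : Dp (w 3) = (-((starRingEnd ℂ) A - Complex.I)) • (w 3 * w 2) +
      (starRingEnd ℂ) B • (w 5 * w 2))
    (hp4 : Dp (w 4) = ((starRingEnd ℂ) A - Complex.I) • (w 4 * w 2) +
      (starRingEnd ℂ) C • (w 5 * w 2))
    (hp5 : Dp (w 5) = 0)
    (hb0 : Db (w 0) = (-(A + Complex.I)) • (w 0 * w 5) + B • (w 2 * w 5))
    (hb1 : Db (w 1) = (A + Complex.I) • (w 1 * w 5) + C • (w 2 * w 5))
    (hb2 : Db (w 2) = 0)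
    (hb3 : Db (w 3) = (-((starRingEnd ℂ) A + Complex.I)) • (w 3 * w 5))
    (hb4 : Db (w 4) = ((starRingEnd ℂ) A + Complex.I) • (w 4 * w 5))
    (hb5 : Db (w 5) = 0)
    (r s t : ℝ) (u v z : ℂ) (hF : HermPos r s t u v z) :
    Dp (Db (Fherm r s t u v z)) * Fherm r s t u v z =
      (2 * ((r : ℂ) ^ 2 * (s : ℂ) ^ 2 * (1 + (A.re : ℂ) ^ 2) +
        (Complex.normSq u : ℂ) * (A.im : ℂ) ^ 2)) •
        (w 0 * w 1 * w 2 * w 3 * w 4 * w 5) ∧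
    Dp (Db (Fherm r s t u v z)) * Fherm r s t u v z ≠ 0 := by
  have key : Dp (Db (Fherm r s t u v z)) * Fherm r s t u v z =
      (2 * ((r : ℂ) ^ 2 * (s : ℂ) ^ 2 * (1 + (A.re : ℂ) ^ 2) +
        (Complex.normSq u : ℂ) * (A.im : ℂ) ^ 2)) • (w 0 * w 1 * w 2 * w 3 * w 4 * w 5) := by
    rw [Dp_Db_Fherm A B C Dp Db hDp hDb hp0 hp1 hp2 hp3 hp4 hp5 hb0 hb1 hb2 hb3 hb4 hb5,
      mul_Fherm, ← mul_conj]
    congr 1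
    linear_combination -2 * (r : ℂ) ^ 2 * (s : ℂ) ^ 2 * (1 + (A.re : ℂ) ^ 2) * I_mul_I
  refine ⟨key, key ▸ smul_ne_zero ?_ w_top_ne_zero⟩
  obtain ⟨hr, hs, -⟩ := hF
  have hpos : 0 < 2 * (r ^ 2 * s ^ 2 * (1 + A.re ^ 2) + normSq u * A.im ^ 2) := by
    have := normSq_nonneg u
    positivity
  exact_mod_cast hpos.ne'

/-- on `(g₈, J_A)` (`dω¹ = −(A−i)ω¹∧ω³ −(A+i)ω¹∧ω̄³ + Bω³∧ω̄³`,
`dω² = (A−i)ω²∧ω³ + (A+i)ω²∧ω̄³ + Cω³∧ω̄³`, `dω³ = 0`, `Im A ≠ 0`), one has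
`∂∂̄F ∧ F = 2(r²s²(1+(Re A)²) + |u|²(Im A)²) ω¹²³∧ω̄¹²³ ≠ 0`: no SKT metric. -/
theorem stmt12 (A B C : ℂ) (hA : A.im ≠ 0)
    (Dp Db : Lambda →ₗ[ℂ] Lambda) (hDp : IsAntideriv Dp) (hDb : IsAntideriv Db)
    (hp0 : Dp (w 0) = (-(A - Complex.I)) • (w 0 * w 2))
    (hp1 : Dp (w 1) = (A - Complex.I) • (w 1 * w 2))
    (hp2 : Dp (w 2) = 0)
    (hp3 : Dp (w 3) = (-((starRingEnd ℂ) A - Complex.I)) • (w 3 * w 2) +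
      (starRingEnd ℂ) B • (w 5 * w 2))
    (hp4 : Dp (w 4) = ((starRingEnd ℂ) A - Complex.I) • (w 4 * w 2) +
      (starRingEnd ℂ) C • (w 5 * w 2))
    (hp5 : Dp (w 5) = 0)
    (hb0 : Db (w 0) = (-(A + Complex.I)) • (w 0 * w 5) + B • (w 2 * w 5))
    (hb1 : Db (w 1) = (A + Complex.I) • (w 1 * w 5) + C • (w 2 * w 5))
    (hb2 : Db (w 2) = 0)
    (hb3 : Db (w 3) = (-((starRingEnd ℂ) A + Complex.I)) • (w 3 * w 5))
    (hb4 : Db (w 4) = ((starRingEnd ℂ) A + Complex.I) • (w 4 * w 5))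
    (hb5 : Db (w 5) = 0)
    (r s t : ℝ) (u v z : ℂ) (hF : HermPos r s t u v z) :
    Dp (Db (Fherm r s t u v z)) * Fherm r s t u v z =
      (2 * ((r : ℂ) ^ 2 * (s : ℂ) ^ 2 * (1 + (A.re : ℂ) ^ 2) +
        (Complex.normSq u : ℂ) * (A.im : ℂ) ^ 2)) •
        (w 0 * w 1 * w 2 * w 3 * w 4 * w 5) ∧
    Dp (Db (Fherm r s t u v z)) * Fherm r s t u v z ≠ 0 :=
  stmt12_general A B C Dp Db hDp hDb hp0 hp1 hp2 hp3 hp4 hp5 hb0 hb1 hb2 hb3 hb4 hb5 r s t u v z hF
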